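/- For d ≥ 2, let f_{d,0}(x) = 1{Σ_{j=1}^d x_j > d−1} for x ∈ [0,1]^d. Then the mean dimension of f_{d,0} with respect to X ~ U[0,1]^d equals ν(f_{d,0}) = d · (1 − 2/(d+1)) / (1 − 1/d!), and consequently ν(f_{d,0}) = d − 2 + o(1) as d → ∞, i.e., lim_{d→∞} (ν(f_{d,0}) − (d−2)) = 0. -/

import Mathlib

open MeasureTheory ProbabilityTheory Real Filter

noncomputable section

/-- Uniform measure on the cube `[0,1]^d`. -/
def unifCube (d : ℕ) : Measure (Fin d → ℝ) :=
  Measure.pi fun _ => (volume : Measure ℝ).restrict (Set.Icc 0 1)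

/-- Sobol' total index `τ̄²_j(f) = (1/2)·E[(f(X) − f(X_{−j}:Z_j))²]`
for `X, Z` independent and uniform on `[0,1]^d`. -/
def sobolTauU (d : ℕ) (f : (Fin d → ℝ) → ℝ) (j : Fin d) : ℝ :=
  (1 / 2) * ∫ p : (Fin d → ℝ) × (Fin d → ℝ),
    (f p.1 - f (Function.update p.1 j (p.2 j))) ^ 2
      ∂((unifCube d).prod (unifCube d))

/-- Mean dimension `ν(f) = (Σ_j τ̄²_j(f)) / Var(f(X))`. -/
def meanDimU (d : ℕ) (f : (Fin d → ℝ) → ℝ) : ℝ :=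
  (∑ j, sobolTauU d f j) / variance f (unifCube d)

/-- The cusp function `f_{d,p}(x) = (Σ_j x_j − (d−1))₊^p`, with the
convention that `f_{d,0}` is the indicator `1{Σ_j x_j > d−1}`. -/
def fdp (d : ℕ) (p : ℝ) (x : Fin d → ℝ) : ℝ :=
  if p = 0 then (if (d : ℝ) - 1 < ∑ j, x j then 1 else 0)
  else (max ((∑ j, x j) - ((d : ℝ) - 1)) 0) ^ p

/-!
Write `S = ∑ᵢ xᵢ`. Once every coordinate but `x_j` is frozen, `1{S > d - 1}` becomes the
indicator of `x_j > c` with `c = d - 1 - ∑_{i ≠ j} xᵢ ≥ 0`, an event of probability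
`q = (∑_{i ≠ j} xᵢ - (d - 2))₊`. Hence `τ̄²_j = E[q (1 - q)]` is an expected conditional Bernoulli
variance. Integrating out one coordinate at a time gives the moments
`E[(∑_{i < m} xᵢ - (m - 1))₊ ^ k] = k! / (m + k)!`, so `τ̄²_j = 1/d! - 2/(d+1)!`, while
`σ² = 1/d! · (1 - 1/d!)`.
-/

open Set
open scoped Nat

def unifIcc : Measure ℝ := volume.restrict (Icc 0 1)

instance : IsProbabilityMeasure unifIcc := ⟨by simp [unifIcc]⟩

lemma unifCube_eq_pi (d : ℕ) : unifCube d = Measure.pi fun _ => unifIcc := rfl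

instance (d : ℕ) : IsProbabilityMeasure (unifCube d) := by
  rw [unifCube_eq_pi]; infer_instance

lemma unifCube_eq_restrict (d : ℕ) : unifCube d = volume.restrict (Icc 0 1) := by
  rw [unifCube, volume_pi, ← Measure.restrict_pi_pi, pi_univ_Icc]
  rfl

lemma ae_sum_le_unifCube (d : ℕ) : ∀ᵐ x ∂unifCube d, ∑ i, x i ≤ (d : ℝ) := by
  rw [unifCube_eq_restrict]
  filter_upwards [ae_restrict_mem measurableSet_Icc] with x hx
  calc ∑ i, x i ≤ ∑ _i : Fin d, (1 : ℝ) := Finset.sum_le_sum fun i _ => hx.2 i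
    _ = d := by simp

lemma Continuous.integrable_unifCube {d : ℕ} {g : (Fin d → ℝ) → ℝ} (hg : Continuous g) :
    Integrable g (unifCube d) := by
  rw [unifCube_eq_restrict]
  exact hg.integrableOn_Icc

lemma Ioi_inter_Icc_zero_one {c : ℝ} (hc : 0 ≤ c) : Ioi c ∩ Icc 0 1 = Ioc c (max c 1) := by
  ext t
  simp only [mem_inter_iff, mem_Ioi, mem_Icc, mem_Ioc, le_max_iff]
  constructor
  · rintro ⟨hct, -, ht1⟩; exact ⟨hct, Or.inr ht1⟩
  · rintro ⟨hct, htc | ht1⟩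
    · exact absurd htc hct.not_ge
    · exact ⟨hct, by linarith, ht1⟩

lemma max_sub_self_one (c : ℝ) : max c 1 - c = max (1 - c) 0 := by
  rw [← max_sub_sub_right, sub_self, max_comm]

lemma unifIcc_real_Ioi {c : ℝ} (hc : 0 ≤ c) : unifIcc.real (Ioi c) = max (1 - c) 0 := by
  rw [unifIcc, measureReal_restrict_apply measurableSet_Ioi, Ioi_inter_Icc_zero_one hc,
    Real.volume_real_Ioc_of_le (le_max_left _ _), max_sub_self_one]

lemma integral_unifIcc_max_sub_pow {k : ℕ} (hk : k ≠ 0) {c : ℝ} (hc : 0 ≤ c) :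
    ∫ t, max (t - c) 0 ^ k ∂unifIcc = max (1 - c) 0 ^ (k + 1) / (k + 1) := by
  have hind : (fun t => max (t - c) 0 ^ k) = (Ioi c).indicator fun t => (t - c) ^ k := by
    ext t
    by_cases hct : c < t
    · simp [hct, max_eq_left (sub_nonneg.2 hct.le)]
    · simp [hct, max_eq_right (sub_nonpos.2 (not_lt.1 hct)), hk]
  rw [hind, integral_indicator measurableSet_Ioi, unifIcc,
    Measure.restrict_restrict measurableSet_Ioi, Ioi_inter_Icc_zero_one hc,
    ← intervalIntegral.integral_of_le (le_max_left _ _),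
    intervalIntegral.integral_comp_sub_right (fun t => t ^ k), integral_pow, max_sub_self_one,
    sub_self, zero_pow (Nat.succ_ne_zero k), sub_zero]

section Pi

variable {α E : Type*} [MeasurableSpace α] [NormedAddCommGroup E] [NormedSpace ℝ E]

theorem integral_pi_succ_eq_integral_insertNth (μ : Measure α) [SigmaFinite μ] {m : ℕ}
    (j : Fin (m + 1)) {g : (Fin (m + 1) → α) → E} (hg : Integrable g (Measure.pi fun _ => μ)) :
    ∫ x, g x ∂Measure.pi (fun _ => μ)
      = ∫ y, ∫ t, g (j.insertNth t y) ∂μ ∂Measure.pi fun _ => μ := by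
  have he := (measurePreserving_piFinSuccAbove (fun _ : Fin (m + 1) => μ) j).symm
  rw [← he.integral_comp' g, integral_prod_symm]
  · rfl
  · exact (he.integrable_comp_emb (MeasurableEquiv.measurableEmbedding _)).2 hg

end Pi

section Indicator

variable {Ω : Type*} [MeasurableSpace Ω] (μ : Measure Ω) [IsProbabilityMeasure μ]
  {A : Set Ω}

lemma integral_mul_indicator_one_add (hA : MeasurableSet A) (b c : ℝ) :
    ∫ t, b * A.indicator 1 t + c ∂μ = b * μ.real A + c := by
  have hint : Integrable (A.indicator (1 : Ω → ℝ)) μ := (integrable_const 1).indicator hA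
  rw [integral_add (hint.const_mul b) (integrable_const c),
    integral_const_mul, integral_indicator_one hA, integral_const, probReal_univ, one_smul]

lemma integral_integral_sq_sub_indicator_one (hA : MeasurableSet A) :
    ∫ s, ∫ t, (A.indicator 1 s - A.indicator 1 t) ^ 2 ∂μ ∂μ
      = 2 * (μ.real A * (1 - μ.real A)) := by
  have hsq : ∀ a : ℝ, (fun t => (a - A.indicator 1 t) ^ 2)
      = fun t => (1 - 2 * a) * A.indicator 1 t + a ^ 2 := by
    intro a; ext t
    by_cases ht : t ∈ A <;> simp [ht]; ring
  simp_rw [hsq, integral_mul_indicator_one_add μ hA]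
  have hlin : (fun s => (1 - 2 * A.indicator 1 s) * μ.real A + A.indicator (1 : Ω → ℝ) s ^ 2)
      = fun s => (1 - 2 * μ.real A) * A.indicator 1 s + μ.real A := by
    ext s
    by_cases hs : s ∈ A <;> simp [hs]; ring
  rw [hlin, integral_mul_indicator_one_add μ hA]
  ring

lemma variance_indicator_one (hA : MeasurableSet A) :
    Var[A.indicator 1; μ] = μ.real A * (1 - μ.real A) := by
  have hsq : A.indicator (1 : Ω → ℝ) ^ 2 = A.indicator 1 := by
    ext t
    by_cases ht : t ∈ A <;> simp [ht]
  have hmem : MemLp (A.indicator (1 : Ω → ℝ)) 2 μ :=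
    memLp_indicator_const 2 hA 1 (Or.inr (measure_ne_top μ A))
  rw [variance_eq_sub hmem, hsq, integral_indicator_one hA]
  ring

end Indicator

theorem sobolTauU_indicator_one {m : ℕ} {A : Set (Fin (m + 1) → ℝ)} (hA : MeasurableSet A)
    (j : Fin (m + 1)) :
    sobolTauU (m + 1) (A.indicator 1) j
      = ∫ y, unifIcc.real ((fun t => j.insertNth t y) ⁻¹' A)
          * (1 - unifIcc.real ((fun t => j.insertNth t y) ⁻¹' A)) ∂unifCube m := by
  set f : (Fin (m + 1) → ℝ) → ℝ := A.indicator 1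
  have hf : Measurable f := measurable_one.indicator hA
  have hF : Integrable (fun p : (Fin (m + 1) → ℝ) × (Fin (m + 1) → ℝ) =>
      (f p.1 - f (Function.update p.1 j (p.2 j))) ^ 2)
      ((unifCube (m + 1)).prod (unifCube (m + 1))) := by
    refine Integrable.of_bound (by fun_prop) 1 (Eventually.of_forall fun p => ?_)
    by_cases h1 : p.1 ∈ A <;> by_cases h2 : Function.update p.1 j (p.2 j) ∈ A <;> simp [f, h1, h2]
  have hinner : ∀ x, ∫ z, (f x - f (Function.update x j (z j))) ^ 2 ∂unifCube (m + 1)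
      = ∫ t, (f x - f (Function.update x j t)) ^ 2 ∂unifIcc :=
    fun x => by
    rw [unifCube_eq_pi]
    exact integral_comp_eval (μ := fun _ => unifIcc) (i := j)
        (f := fun t => (f x - f (Function.update x j t)) ^ 2)
        ((hf.comp (measurable_update x)).const_sub _ |>.pow_const 2).aestronglyMeasurable
  have hG := hF.integral_prod_left
  simp_rw [hinner] at hG
  rw [sobolTauU, integral_prod _ hF]
  simp_rw [hinner]
  rw [unifCube_eq_pi, integral_pi_succ_eq_integral_insertNth unifIcc j hG]
  simp_rw [Fin.update_insertNth]
  have hslice : ∀ y : Fin m → ℝ,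
      ∫ s, ∫ t, (f (j.insertNth s y) - f (j.insertNth t y)) ^ 2 ∂unifIcc ∂unifIcc
        = 2 * (unifIcc.real ((fun t => j.insertNth t y) ⁻¹' A)
          * (1 - unifIcc.real ((fun t => j.insertNth t y) ⁻¹' A))) :=
    fun y => integral_integral_sq_sub_indicator_one unifIcc (hA.preimage (by fun_prop))
  simp_rw [hslice, integral_const_mul]
  rw [unifCube_eq_pi]
  ring

theorem integral_unifCube_max_sum_sub_pow (m : ℕ) {k : ℕ} (hk : k ≠ 0) :
    ∫ x, max (∑ i, x i - (m - 1)) 0 ^ k ∂unifCube m = (k ! : ℝ) / (m + k)! := by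
  induction m generalizing k with
  | zero => simp [k.factorial_ne_zero]
  | succ m ih =>
    have hint : Integrable (fun x : Fin (m + 1) → ℝ => max (∑ i, x i - ((m + 1 : ℕ) - 1)) 0 ^ k)
        (unifCube (m + 1)) :=
      Continuous.integrable_unifCube (by fun_prop)
    have hinner : ∀ᵐ y ∂unifCube m,
        ∫ t, max (∑ i, (0 : Fin (m + 1)).insertNth t y i - ((m + 1 : ℕ) - 1)) 0 ^ k ∂unifIcc
          = max (∑ i, y i - (m - 1)) 0 ^ (k + 1) / (k + 1) := by
      filter_upwards [ae_sum_le_unifCube m] with y hy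
      have hshift : ∀ t, ∑ i, (0 : Fin (m + 1)).insertNth t y i - ((m + 1 : ℕ) - 1)
          = t - (m - ∑ i, y i) := fun t => by push_cast [Fin.sum_insertNth]; ring
      simp_rw [hshift]
      rw [integral_unifIcc_max_sub_pow hk (by linarith)]
      ring_nf
    rw [unifCube_eq_pi, integral_pi_succ_eq_integral_insertNth unifIcc 0 hint, ← unifCube_eq_pi,
      integral_congr_ae hinner, integral_div, ih k.succ_ne_zero, Nat.factorial_succ,
      show m + (k + 1) = m + 1 + k by ring]
    push_cast
    field_simp

def cusp (d : ℕ) : Set (Fin d → ℝ) := {x | (d : ℝ) - 1 < ∑ i, x i}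

lemma measurableSet_cusp (d : ℕ) : MeasurableSet (cusp d) :=
  measurableSet_lt measurable_const (by fun_prop)

lemma fdp_zero_eq_indicator (d : ℕ) : fdp d 0 = (cusp d).indicator 1 := by
  ext x
  simp [fdp, cusp, Set.indicator_apply]

lemma ae_unifIcc_real_insertNth_preimage_cusp {m : ℕ} (j : Fin (m + 1)) :
    ∀ᵐ y ∂unifCube m, unifIcc.real ((fun t => j.insertNth t y) ⁻¹' cusp (m + 1))
      = max (∑ i, y i - (m - 1)) 0 := by
  filter_upwards [ae_sum_le_unifCube m] with y hy
  have hslice : (fun t => j.insertNth t y) ⁻¹' cusp (m + 1) = Ioi (m - ∑ i, y i) := by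
    ext t
    simp only [cusp, mem_preimage, mem_ofPred_eq, Fin.sum_insertNth, mem_Ioi]
    push_cast
    constructor <;> intro h <;> linarith
  rw [hslice, unifIcc_real_Ioi (by linarith)]
  ring_nf

lemma unifCube_real_cusp (m : ℕ) : (unifCube (m + 1)).real (cusp (m + 1)) = 1 / (m + 1)! := by
  have hint : Integrable ((cusp (m + 1)).indicator (1 : (Fin (m + 1) → ℝ) → ℝ))
      (unifCube (m + 1)) :=
    (integrable_const 1).indicator (measurableSet_cusp _)
  have hinner : ∀ y : Fin m → ℝ, ∫ t, (cusp (m + 1)).indicator 1 ((0 : Fin (m + 1)).insertNth t y)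
      ∂unifIcc = unifIcc.real ((fun t => (0 : Fin (m + 1)).insertNth t y) ⁻¹' cusp (m + 1)) :=
    fun y => integral_indicator_one ((measurableSet_cusp _).preimage (by fun_prop))
  rw [← integral_indicator_one (measurableSet_cusp _), unifCube_eq_pi,
    integral_pi_succ_eq_integral_insertNth unifIcc 0 hint, ← unifCube_eq_pi]
  simp_rw [hinner]
  rw [integral_congr_ae (ae_unifIcc_real_insertNth_preimage_cusp 0)]
  simpa using integral_unifCube_max_sum_sub_pow m one_ne_zero

lemma sobolTauU_fdp_zero (m : ℕ) (j : Fin (m + 1)) :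
    sobolTauU (m + 1) (fdp (m + 1) 0) j = 1 / (m + 1)! - 2 / (m + 2)! := by
  rw [fdp_zero_eq_indicator, sobolTauU_indicator_one (measurableSet_cusp _)]
  have hq : ∀ᵐ y ∂unifCube m,
      unifIcc.real ((fun t => j.insertNth t y) ⁻¹' cusp (m + 1))
        * (1 - unifIcc.real ((fun t => j.insertNth t y) ⁻¹' cusp (m + 1)))
      = max (∑ i, y i - (m - 1)) 0 ^ 1 - max (∑ i, y i - (m - 1)) 0 ^ 2 := by
    filter_upwards [ae_unifIcc_real_insertNth_preimage_cusp j] with y hy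
    rw [hy]
    ring
  rw [integral_congr_ae hq, integral_sub (Continuous.integrable_unifCube (by fun_prop))
    (Continuous.integrable_unifCube (by fun_prop)), integral_unifCube_max_sum_sub_pow m one_ne_zero,
    integral_unifCube_max_sum_sub_pow m two_ne_zero]
  norm_num

theorem meanDimU_fdp_zero {d : ℕ} (hd : d ≠ 0) :
    meanDimU d (fdp d 0) = d * (1 - 2 / ((d : ℝ) + 1)) / (1 - 1 / (d ! : ℝ)) := by
  obtain ⟨m, rfl⟩ := Nat.exists_eq_succ_of_ne_zero hd
  have htau : (1 : ℝ) / (m + 1)! - 2 / (m + 2)! = 1 / (m + 1)! * (1 - 2 / ((m + 1 : ℕ) + 1)) := by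
    rw [Nat.factorial_succ (m + 1)]
    push_cast
    field_simp
  simp only [meanDimU, sobolTauU_fdp_zero, Finset.sum_const, Finset.card_univ, Fintype.card_fin,
    nsmul_eq_mul, htau]
  rw [fdp_zero_eq_indicator, variance_indicator_one _ (measurableSet_cusp _), unifCube_real_cusp,
    mul_left_comm, mul_div_mul_left _ _ (by positivity)]

theorem tendsto_meanDimU_fdp_zero_sub :
    Tendsto (fun d : ℕ => meanDimU d (fdp d 0) - (d - 2)) atTop (nhds 0) := by
  have hfact : Tendsto (fun d : ℕ => 1 / (d ! : ℝ)) atTop (nhds 0) := by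
    simpa using FloorSemiring.tendsto_pow_div_factorial_atTop (1 : ℝ)
  have hdfact : Tendsto (fun d : ℕ => (d : ℝ) / d !) atTop (nhds 0) := by
    refine (FloorSemiring.tendsto_mul_pow_div_factorial_sub_atTop (1 : ℝ) 1 1).congr' ?_
    filter_upwards [eventually_ne_atTop 0] with d hd
    rw [← Nat.mul_factorial_pred hd, one_pow]
    push_cast
    field_simp
  have hrec : Tendsto (fun d : ℕ => 2 * (1 / ((d : ℝ) + 1))) atTop (nhds (2 * 0)) :=
    tendsto_one_div_add_atTop_nhds_zero_nat.const_mul 2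
  have hlim := (hrec.add (hdfact.sub (hfact.const_mul 2))).div (tendsto_const_nhds.sub hfact)
    (by norm_num : (1 : ℝ) - 0 ≠ 0)
  simp only [mul_zero, sub_zero, add_zero, zero_div] at hlim
  refine hlim.congr' ?_
  filter_upwards [eventually_ge_atTop 2] with d hd
  have hfact_ne : (d ! : ℝ) - 1 ≠ 0 := by
    have : (2 : ℝ) ≤ d ! := by exact_mod_cast hd.trans d.self_le_factorial
    linarith
  rw [Pi.div_apply, meanDimU_fdp_zero (by omega), one_sub_div (by positivity)]
  field_simp
  ring

/-- Mean dimension of the jump cusp `f_{d,0}`: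
`ν(f_{d,0}) = d(1 − 2/(d+1))/(1 − 1/d!)`, and `ν(f_{d,0}) = d − 2 + o(1)`. -/
theorem stmt12 :
    (∀ d : ℕ, 2 ≤ d →
      meanDimU d (fdp d 0)
        = d * (1 - 2 / ((d : ℝ) + 1)) / (1 - 1 / (d.factorial : ℝ)))
    ∧ Tendsto (fun d : ℕ => meanDimU d (fdp d 0) - ((d : ℝ) - 2))
        atTop (nhds 0) :=
  ⟨fun _ hd => meanDimU_fdp_zero (by omega), tendsto_meanDimU_fdp_zero_sub⟩

end
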